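/- arXiv:2103.03237 — 2 statements merged into one kernel-verified Lean document; each statement's English description precedes it below -/
import Mathlib

section
/- Let $\widehat{\Sigma} \in \mathbb{R}^{d\times d}$ be a symmetric positive semidefinite matrix with orthogonal decomposition $\widehat{\Sigma} = \sum_{k=1}^d s_k u_k u_k^\top$ (with $s_k \geq 0$ eigenvalues and $u_k$ orthonormal eigenvectors), and let $\lambda \geq 0$. Then the matrix $\widehat{\Sigma}^\lambda = \sum_{k=1}^d \max\{s_k - \lambda/2, 0\} u_k u_k^\top$ is the unique minimizer over all $A \in \mathbb{R}^{d\times d}$ of the function $L(A) = \|\widehat{\Sigma} - A\|_2^2 + \lambda \|A\|_1$, where $\|\cdot\|_2$ is the Frobenius norm and $\|\cdot\|_1$ the nuclear norm (sum of singular values). -/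
open Matrix MeasureTheory Finset

/-- Singular values of a real matrix (as square roots of the eigenvalues of `Aᴴ * A`),
indexed by columns; not necessarily sorted. -/
noncomputable def sval {m q : ℕ} (A : Matrix (Fin m) (Fin q) ℝ) (k : Fin q) : ℝ :=
  Real.sqrt ((Matrix.isHermitian_conjTranspose_mul_self A).eigenvalues k)

/-- Nuclear (Schatten-1) norm: sum of singular values. -/
noncomputable def nucNorm {m q : ℕ} (A : Matrix (Fin m) (Fin q) ℝ) : ℝ :=
  ∑ k, sval A k

/-- Frobenius (Schatten-2) norm. -/
noncomputable def frobNorm {m q : ℕ} (A : Matrix (Fin m) (Fin q) ℝ) : ℝ :=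
  Real.sqrt (Matrix.trace (Aᴴ * A))

/-- Spectral norm: largest singular value. -/
noncomputable def specNorm {m q : ℕ} (A : Matrix (Fin m) (Fin q) ℝ) : ℝ :=
  ⨆ k, sval A k

/-- `rankAt A ε`: number of singular values of `A` that are `≥ ε`. -/
noncomputable def rankAt {m q : ℕ} (A : Matrix (Fin m) (Fin q) ℝ) (ε : ℝ) : ℕ :=
  Nat.card {k : Fin q // ε ≤ sval A k}

/-- `svalOrd A k`: the `(k+1)`-th largest singular value of `A`. -/
noncomputable def svalOrd {m q : ℕ} (A : Matrix (Fin m) (Fin q) ℝ) (k : Fin q) : ℝ :=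
  sSup {t : ℝ | (k : ℕ) + 1 ≤ rankAt A t}

/-!
Let `U` be the orthogonal matrix with rows `u k`, so that `Σ̂ = Uᵀ diag(s) U`, and put
`B = U A Uᵀ`. The Frobenius term is invariant under this conjugation, and the nuclear norm of `A`
dominates `∑ k, |B k k|` (Cauchy–Schwarz in an eigenbasis of `Aᵀ A`). Hence `L(A)` is bounded
below by a sum of independent costs of the entries of `B`: `(s k - B k k)² + λ |B k k|` on the
diagonal and `(B k l)²` off it. Each is uniquely minimized by the soft-threshold
`max (s k - λ/2) 0`, resp. by `0`, and `Σ̂^λ = Uᵀ diag(max (s - λ/2) 0) U` attains the bound.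
-/

lemma frobNorm_sq_eq_sum {m q : ℕ} (X : Matrix (Fin m) (Fin q) ℝ) :
    frobNorm X ^ 2 = ∑ i, ∑ j, X i j ^ 2 := by
  have h : trace (Xᴴ * X) = ∑ i, ∑ j, X i j ^ 2 := by
    simp [trace, mul_apply, sq, Finset.sum_comm (γ := Fin q)]
  rw [frobNorm, h, Real.sq_sqrt (by positivity)]

lemma frobNorm_transpose_mul_mul {d : ℕ} {U : Matrix (Fin d) (Fin d) ℝ} (hU : U * Uᵀ = 1)
    (X : Matrix (Fin d) (Fin d) ℝ) : frobNorm (Uᵀ * X * U) = frobNorm X := by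
  simp only [frobNorm, conjTranspose_eq_transpose_of_trivial, transpose_mul, transpose_transpose]
  congr 1
  calc trace (Uᵀ * (Xᵀ * U) * (Uᵀ * X * U)) = trace (Uᵀ * (Xᵀ * (U * Uᵀ) * X) * U) := by
        simp only [mul_assoc]
    _ = trace (Xᵀ * X) := by rw [hU, mul_one, trace_mul_cycle, hU, one_mul]

noncomputable def softThreshold (lam x : ℝ) : ℝ := max (x - lam / 2) 0

lemma softThreshold_nonneg (lam x : ℝ) : 0 ≤ softThreshold lam x := le_max_right _ _

lemma sq_sub_softThreshold_add_lt {lam x b : ℝ} (hlam : 0 ≤ lam) (hx : 0 ≤ x)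
    (hb : b ≠ softThreshold lam x) :
    (x - softThreshold lam x) ^ 2 + lam * |softThreshold lam x| < (x - b) ^ 2 + lam * |b| := by
  rcases le_or_gt (lam / 2) x with h | h
  · have ht : softThreshold lam x = x - lam / 2 := max_eq_left (by linarith)
    rw [ht, abs_of_nonneg (by linarith)]
    have : x - b - lam / 2 ≠ 0 := fun h0 => hb (by linarith)
    have : 0 < (x - b - lam / 2) ^ 2 := by positivity
    nlinarith [mul_le_mul_of_nonneg_left (le_abs_self b) hlam]
  · have ht : softThreshold lam x = 0 := max_eq_right (by linarith)
    rw [ht] at hb ⊢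
    simp only [sub_zero, abs_zero, mul_zero, add_zero]
    have : 0 < |b| := abs_pos.mpr hb
    nlinarith [mul_le_mul_of_nonneg_left (le_abs_self b) hx, sq_abs b, mul_pos this this,
      mul_pos this (by linarith : 0 < lam - 2 * x)]

section EntrywiseCost

variable {n : Type*} [DecidableEq n] {lam : ℝ} {s : n → ℝ}

variable (lam s) in
def entryCost (k l : n) (b : ℝ) : ℝ :=
  (diagonal s k l - b) ^ 2 + if k = l then lam * |b| else 0

lemma entryCost_softThreshold_lt (hlam : 0 ≤ lam) {k l : n} (hs : 0 ≤ s k) {b : ℝ}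
    (hb : b ≠ diagonal (fun i => softThreshold lam (s i)) k l) :
    entryCost lam s k l (diagonal (fun i => softThreshold lam (s i)) k l)
      < entryCost lam s k l b := by
  unfold entryCost
  by_cases hkl : k = l
  · subst hkl
    simpa using sq_sub_softThreshold_add_lt hlam hs (by simpa using hb)
  · simp only [diagonal_apply_ne _ hkl, if_neg hkl] at hb ⊢
    have : 0 < b ^ 2 := by positivity
    simpa using this

variable [Fintype n]

variable (lam s) in
def entrywiseCost (B : Matrix n n ℝ) : ℝ :=
  ∑ k, ∑ l, entryCost lam s k l (B k l)

lemma entrywiseCost_softThreshold_lt (hlam : 0 ≤ lam) (hs : ∀ k, 0 ≤ s k) {B : Matrix n n ℝ}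
    (hB : B ≠ diagonal (fun i => softThreshold lam (s i))) :
    entrywiseCost lam s (diagonal (fun i => softThreshold lam (s i))) < entrywiseCost lam s B := by
  have hle : ∀ k l, entryCost lam s k l (diagonal (fun i => softThreshold lam (s i)) k l)
      ≤ entryCost lam s k l (B k l) := fun k l => by
    rcases eq_or_ne (B k l) (diagonal (fun i => softThreshold lam (s i)) k l) with h | h
    · rw [h]
    · exact (entryCost_softThreshold_lt hlam (hs k) h).le
  obtain ⟨k, l, hkl⟩ : ∃ k l, B k l ≠ diagonal (fun i => softThreshold lam (s i)) k l := by
    by_contra! h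
    exact hB (Matrix.ext h)
  exact sum_lt_sum (fun k _ => sum_le_sum fun l _ => hle k l) ⟨k, mem_univ k,
    sum_lt_sum (fun l _ => hle k l) ⟨l, mem_univ l, entryCost_softThreshold_lt hlam (hs k) hkl⟩⟩

end EntrywiseCost

lemma frobNorm_diagonal_sub_sq_add_eq_entrywiseCost {d : ℕ} (lam : ℝ) (s : Fin d → ℝ)
    (B : Matrix (Fin d) (Fin d) ℝ) :
    frobNorm (diagonal s - B) ^ 2 + lam * ∑ k, |B k k| = entrywiseCost lam s B := by
  simp [frobNorm_sq_eq_sum, entrywiseCost, entryCost, sum_add_distrib, mul_sum]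

lemma map_eigenvalues_eq_of_eq_transpose_mul_diagonal_mul {n : Type*} [Fintype n] [DecidableEq n]
    {M U : Matrix n n ℝ} (hM : M.IsHermitian) (hU : U * Uᵀ = 1) {c : n → ℝ}
    (hMc : M = Uᵀ * diagonal c * U) :
    univ.val.map hM.eigenvalues = univ.val.map c := by
  have hroots : M.charpoly.roots = univ.val.map c := by
    rw [hMc, charpoly_mul_comm, ← mul_assoc, hU, one_mul, charpoly_diagonal, Polynomial.roots_prod]
    · simp
    · simp [Finset.prod_ne_zero_iff, Polynomial.X_sub_C_ne_zero]
  simpa [hroots] using hM.roots_charpoly_eq_eigenvalues.symm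

lemma nucNorm_transpose_mul_diagonal_mul {d : ℕ} {U : Matrix (Fin d) (Fin d) ℝ} (hU : U * Uᵀ = 1)
    {c : Fin d → ℝ} (hc : ∀ k, 0 ≤ c k) : nucNorm (Uᵀ * diagonal c * U) = ∑ k, c k := by
  have hsq : (Uᵀ * diagonal c * U)ᴴ * (Uᵀ * diagonal c * U)
      = Uᵀ * diagonal (fun k => c k ^ 2) * U := by
    simp only [conjTranspose_eq_transpose_of_trivial, transpose_mul, transpose_transpose,
      diagonal_transpose]
    calc Uᵀ * (diagonal c * U) * (Uᵀ * diagonal c * U)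
          = Uᵀ * (diagonal c * (U * Uᵀ) * diagonal c) * U := by simp only [mul_assoc]
      _ = Uᵀ * diagonal (fun k => c k ^ 2) * U := by
          rw [hU, mul_one, diagonal_mul_diagonal]; simp only [sq]
  have h := congrArg (fun m => (m.map Real.sqrt).sum)
    (map_eigenvalues_eq_of_eq_transpose_mul_diagonal_mul
      (isHermitian_conjTranspose_mul_self _) hU hsq)
  simp only [Multiset.map_map] at h
  calc nucNorm (Uᵀ * diagonal c * U) = ∑ k, √(c k ^ 2) := h
    _ = ∑ k, c k := sum_congr rfl fun k _ => Real.sqrt_sq (hc k)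

lemma sum_abs_diag_mul_transpose_le {m n : Type*} [Fintype m] [Fintype n] (W Z : Matrix m n ℝ) :
    ∑ k, |(W * Zᵀ) k k| ≤ ∑ i, √((Wᵀ * W) i i) * √((Zᵀ * Z) i i) := by
  calc ∑ k, |(W * Zᵀ) k k| ≤ ∑ k, ∑ i, |W k i| * |Z k i| := by
        refine sum_le_sum fun k _ => ?_
        simpa only [mul_apply, transpose_apply, abs_mul] using
          abs_sum_le_sum_abs (fun i => W k i * Z k i) univ
    _ = ∑ i, ∑ k, |W k i| * |Z k i| := sum_comm
    _ ≤ ∑ i, √(∑ k, |W k i| ^ 2) * √(∑ k, |Z k i| ^ 2) :=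
        sum_le_sum fun i _ => Real.sum_mul_le_sqrt_mul_sqrt _ _ _
    _ = ∑ i, √((Wᵀ * W) i i) * √((Zᵀ * Z) i i) := by
        simp only [sq, abs_mul_abs_self, mul_apply, transpose_apply]

lemma sum_abs_diag_mul_mul_transpose_le_nucNorm {d : ℕ} {U V : Matrix (Fin d) (Fin d) ℝ}
    (hU : Uᵀ * U = 1) (hV : Vᵀ * V = 1) (A : Matrix (Fin d) (Fin d) ℝ) :
    ∑ k, |(U * A * Vᵀ) k k| ≤ nucNorm A := by
  -- With `Y` an orthonormal eigenbasis of `Aᵀ A`, `U A Vᵀ = (U A Y) (V Y)ᵀ` and the columns of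
  -- `U A Y` have the singular values of `A` as norms.
  set hM := isHermitian_conjTranspose_mul_self A
  set Y : Matrix (Fin d) (Fin d) ℝ := (hM.eigenvectorUnitary : Matrix (Fin d) (Fin d) ℝ)
  have hY : Yᵀ * Y = 1 := by
    simpa [Y, star_eq_conjTranspose, conjTranspose_eq_transpose_of_trivial] using
      Unitary.star_mul_self_of_mem hM.eigenvectorUnitary.2
  have hYYt : Y * Yᵀ = 1 := mul_eq_one_comm.mp hY
  have hdiag : Yᵀ * (Aᵀ * A) * Y = diagonal hM.eigenvalues := by
    simpa [Y, star_eq_conjTranspose, conjTranspose_eq_transpose_of_trivial] using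
      hM.conjStarAlgAut_star_eigenvectorUnitary
  have hsplit : U * A * Vᵀ = (U * A * Y) * (V * Y)ᵀ := by
    rw [transpose_mul, mul_assoc (U * A) Y, ← mul_assoc Y, hYYt, one_mul]
  have hW : (U * A * Y)ᵀ * (U * A * Y) = diagonal hM.eigenvalues := by
    rw [← hdiag]
    simp only [transpose_mul, mul_assoc]
    rw [← mul_assoc Uᵀ, hU, one_mul]
  have hZ : (V * Y)ᵀ * (V * Y) = 1 := by
    rw [transpose_mul, mul_assoc, ← mul_assoc Vᵀ, hV, one_mul, hY]
  have hcs := sum_abs_diag_mul_transpose_le (U * A * Y) (V * Y)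
  rw [← hsplit, hW, hZ] at hcs
  simpa [nucNorm, sval] using hcs

noncomputable def nuclearPenalizedLoss {d : ℕ} (lam : ℝ) (S A : Matrix (Fin d) (Fin d) ℝ) : ℝ :=
  frobNorm (S - A) ^ 2 + lam * nucNorm A

section OrthogonalConj

variable {d : ℕ} {U : Matrix (Fin d) (Fin d) ℝ} {lam : ℝ} {s : Fin d → ℝ}

lemma transpose_mul_conj_mul (hUt : Uᵀ * U = 1) (A : Matrix (Fin d) (Fin d) ℝ) :
    Uᵀ * (U * A * Uᵀ) * U = A := by
  rw [← mul_assoc, ← mul_assoc, hUt, one_mul, mul_assoc, hUt, mul_one]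

lemma entrywiseCost_conj_le_nuclearPenalizedLoss (hU : U * Uᵀ = 1) (hlam : 0 ≤ lam)
    (A : Matrix (Fin d) (Fin d) ℝ) :
    entrywiseCost lam s (U * A * Uᵀ) ≤ nuclearPenalizedLoss lam (Uᵀ * diagonal s * U) A := by
  have hUt : Uᵀ * U = 1 := mul_eq_one_comm.mp hU
  have hsub : Uᵀ * diagonal s * U - A = Uᵀ * (diagonal s - U * A * Uᵀ) * U := by
    rw [mul_sub, sub_mul, transpose_mul_conj_mul hUt]
  rw [nuclearPenalizedLoss, hsub, frobNorm_transpose_mul_mul hU,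
    ← frobNorm_diagonal_sub_sq_add_eq_entrywiseCost]
  gcongr
  exact sum_abs_diag_mul_mul_transpose_le_nucNorm hUt hUt A

lemma nuclearPenalizedLoss_conj_diagonal (hU : U * Uᵀ = 1) {t : Fin d → ℝ} (ht : ∀ k, 0 ≤ t k) :
    nuclearPenalizedLoss lam (Uᵀ * diagonal s * U) (Uᵀ * diagonal t * U)
      = entrywiseCost lam s (diagonal t) := by
  rw [nuclearPenalizedLoss, ← sub_mul, ← mul_sub, frobNorm_transpose_mul_mul hU,
    nucNorm_transpose_mul_diagonal_mul hU ht, ← frobNorm_diagonal_sub_sq_add_eq_entrywiseCost]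
  simp [abs_of_nonneg (ht _)]

theorem nuclearPenalizedLoss_softThreshold_lt (hU : U * Uᵀ = 1) (hlam : 0 ≤ lam)
    (hs : ∀ k, 0 ≤ s k) {A : Matrix (Fin d) (Fin d) ℝ}
    (hA : A ≠ Uᵀ * diagonal (fun k => softThreshold lam (s k)) * U) :
    nuclearPenalizedLoss lam (Uᵀ * diagonal s * U)
        (Uᵀ * diagonal (fun k => softThreshold lam (s k)) * U)
      < nuclearPenalizedLoss lam (Uᵀ * diagonal s * U) A := by
  have hUt : Uᵀ * U = 1 := mul_eq_one_comm.mp hU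
  have hB : U * A * Uᵀ ≠ diagonal (fun k => softThreshold lam (s k)) := fun h => hA <| by
    rw [← h, transpose_mul_conj_mul hUt]
  calc _ = entrywiseCost lam s (diagonal fun k => softThreshold lam (s k)) :=
        nuclearPenalizedLoss_conj_diagonal hU fun k => softThreshold_nonneg lam (s k)
    _ < entrywiseCost lam s (U * A * Uᵀ) := entrywiseCost_softThreshold_lt hlam hs hB
    _ ≤ _ := entrywiseCost_conj_le_nuclearPenalizedLoss hU hlam A

end OrthogonalConj

lemma sum_smul_vecMulVec_eq_transpose_mul_diagonal_mul {n : Type*} [Fintype n] [DecidableEq n]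
    (u : n → n → ℝ) (c : n → ℝ) :
    ∑ k, c k • vecMulVec (u k) (u k) = (of u)ᵀ * diagonal c * of u := by
  ext a b
  simp [Matrix.sum_apply, vecMulVec_apply, mul_apply, diagonal_apply, mul_comm, mul_left_comm]

/-- Soft-thresholding the eigenvalues is the unique minimizer of the
nuclear-norm-penalized least squares problem. -/
theorem soft_thresholding_unique_minimizer {d : ℕ}
    (Shat : Matrix (Fin d) (Fin d) ℝ) (s : Fin d → ℝ) (u : Fin d → (Fin d → ℝ))
    (hs : ∀ k, 0 ≤ s k)
    (hu : ∀ i j, u i ⬝ᵥ u j = if i = j then (1 : ℝ) else 0)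
    (hShat : Shat = ∑ k, s k • Matrix.vecMulVec (u k) (u k))
    (lam : ℝ) (hlam : 0 ≤ lam)
    (Slam : Matrix (Fin d) (Fin d) ℝ)
    (hSlam : Slam = ∑ k, max (s k - lam / 2) 0 • Matrix.vecMulVec (u k) (u k)) :
    (∀ A : Matrix (Fin d) (Fin d) ℝ,
        frobNorm (Shat - Slam) ^ 2 + lam * nucNorm Slam
          ≤ frobNorm (Shat - A) ^ 2 + lam * nucNorm A) ∧
    (∀ A : Matrix (Fin d) (Fin d) ℝ, A ≠ Slam →
        frobNorm (Shat - Slam) ^ 2 + lam * nucNorm Slam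
          < frobNorm (Shat - A) ^ 2 + lam * nucNorm A) := by
  have hU : of u * (of u)ᵀ = 1 := by
    ext i j
    simpa [mul_apply, one_apply, dotProduct] using hu i j
  have hSlam' : Slam = (of u)ᵀ * diagonal (fun k => softThreshold lam (s k)) * of u :=
    hSlam.trans (sum_smul_vecMulVec_eq_transpose_mul_diagonal_mul u _)
  rw [sum_smul_vecMulVec_eq_transpose_mul_diagonal_mul] at hShat
  subst hShat hSlam'
  refine ⟨fun A => ?_, fun A hA => nuclearPenalizedLoss_softThreshold_lt hU hlam hs hA⟩
  rcases eq_or_ne A ((of u)ᵀ * diagonal (fun k => softThreshold lam (s k)) * of u) with rfl | hA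
  · exact le_rfl
  · exact (nuclearPenalizedLoss_softThreshold_lt hU hlam hs hA).le
end

section
/- Let $\widehat{\Sigma}, \Sigma \in \mathbb{R}^{d\times d}$ and $\lambda > 0$ with $2\|\widehat{\Sigma} - \Sigma\|_\infty \leq \lambda$, where $\|\cdot\|_\infty$ is the spectral norm. Let $\widehat{\Sigma}^\lambda$ be the minimizer of $A \mapsto \|\widehat{\Sigma} - A\|_2^2 + \lambda\|A\|_1$. Then for every matrix $A \in \mathbb{R}^{d\times d}$, $\|\widehat{\Sigma}^\lambda - \Sigma\|_2^2 \leq \|A - \Sigma\|_2^2 + 2\lambda \|A\|_1$. In particular $\|\widehat{\Sigma}^\lambda - \Sigma\|_2^2 \leq 2\lambda\|\Sigma\|_1$. -/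
/-!
Write `E = Ŝ - Σ`. Expanding `‖Ŝ - B‖₂² = ‖E - (B - Σ)‖₂²` in the minimality of `Ŝ^λ`
against `A` gives
`‖Ŝ^λ - Σ‖₂² ≤ ‖A - Σ‖₂² + 2⟨E, Ŝ^λ - A⟩ + λ‖A‖₁ - λ‖Ŝ^λ‖₁`,
and trace duality with `2‖E‖_∞ ≤ λ` bounds the cross term by `λ‖Ŝ^λ‖₁ + λ‖A‖₁`.
Taking `A = Σ` gives the second bound.

Trace duality is proved in the right singular basis `u_k` of `B` (eigenvectors of `BᴴB`):
`⟨E, B⟩ = ∑ₖ ⟨E u_k, B u_k⟩`, where `‖B u_k‖ = σ_k(B)`, and `‖E u_k‖ ≤ ‖E‖_∞` because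
all eigenvalues of `EᴴE` are at most `‖E‖_∞²` (Rayleigh bound).
-/

open Matrix MeasureTheory Finset

lemma conjTranspose_mul_self_apply_self {n p : Type*} [Fintype n] (M : Matrix n p ℝ) (k : p) :
    (Mᴴ * M) k k = ∑ i, M i k ^ 2 := by
  simp [mul_apply, sq]

lemma trace_conjTranspose_mul_comm {n p : Type*} [Fintype n] [Fintype p] (X Y : Matrix n p ℝ) :
    trace (Yᴴ * X) = trace (Xᴴ * Y) := by
  simpa using trace_conjTranspose (Xᴴ * Y)

lemma conjTranspose_mul_mul_apply_self_le {n p : Type*} [DecidableEq n] [Fintype p]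
    [DecidableEq p] {H : Matrix p p ℝ} (hH : H.IsHermitian) {c : ℝ}
    (hc : ∀ j, hH.eigenvalues j ≤ c) {U : Matrix p n ℝ} (hU : Uᴴ * U = 1) (k : n) :
    (Uᴴ * H * U) k k ≤ c := by
  set W : Matrix p p ℝ := (hH.eigenvectorUnitary : Matrix p p ℝ)
  set N := Wᴴ * U
  have hN : Nᴴ * N = 1 := by
    have hW : W * Wᴴ = 1 := Unitary.coe_mul_star_self _
    calc Nᴴ * N = Uᴴ * (W * Wᴴ) * U := by
          simp only [N, conjTranspose_mul, conjTranspose_conjTranspose, Matrix.mul_assoc]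
      _ = 1 := by rw [hW, Matrix.mul_one, hU]
  have hHN : Uᴴ * H * U = Nᴴ * diagonal hH.eigenvalues * N := by
    conv_lhs => rw [hH.spectral_theorem]
    simp [N, W, Unitary.conjStarAlgAut_apply, Matrix.mul_assoc, star_eq_conjTranspose]
  calc (Uᴴ * H * U) k k = ∑ j, hH.eigenvalues j * N j k ^ 2 := by
        rw [hHN, mul_apply]
        simp only [mul_diagonal, conjTranspose_apply, star_trivial]
        exact Finset.sum_congr rfl fun j _ => by ring
    _ ≤ ∑ j, c * N j k ^ 2 := by gcongr with j; exact hc j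
    _ = c := by
        rw [← Finset.mul_sum, ← conjTranspose_mul_self_apply_self, hN, one_apply_eq, mul_one]

variable {m q : ℕ}

lemma sval_nonneg (A : Matrix (Fin m) (Fin q) ℝ) (k : Fin q) : 0 ≤ sval A k :=
  Real.sqrt_nonneg _

lemma sval_sq (A : Matrix (Fin m) (Fin q) ℝ) (k : Fin q) :
    sval A k ^ 2 = (isHermitian_conjTranspose_mul_self A).eigenvalues k :=
  Real.sq_sqrt (eigenvalues_conjTranspose_mul_self_nonneg A k)

lemma sval_le_specNorm (A : Matrix (Fin m) (Fin q) ℝ) (k : Fin q) : sval A k ≤ specNorm A :=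
  le_ciSup (Set.finite_range _).bddAbove k

lemma specNorm_nonneg (A : Matrix (Fin m) (Fin q) ℝ) : 0 ≤ specNorm A :=
  Real.iSup_nonneg (sval_nonneg A)

lemma nucNorm_nonneg (A : Matrix (Fin m) (Fin q) ℝ) : 0 ≤ nucNorm A :=
  Finset.sum_nonneg fun k _ => sval_nonneg A k

lemma nucNorm_neg (A : Matrix (Fin m) (Fin q) ℝ) : nucNorm (-A) = nucNorm A := by
  unfold nucNorm sval
  congr! 3
  simp

lemma sum_sq_mul_col_le_specNorm_sq (E : Matrix (Fin m) (Fin q) ℝ) {p : Type*} [Fintype p]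
    [DecidableEq p] {U : Matrix (Fin q) p ℝ} (hU : Uᴴ * U = 1) (k : p) :
    ∑ i, (E * U) i k ^ 2 ≤ specNorm E ^ 2 := by
  rw [← conjTranspose_mul_self_apply_self, conjTranspose_mul,
    show Uᴴ * Eᴴ * (E * U) = Uᴴ * (Eᴴ * E) * U by simp only [Matrix.mul_assoc]]
  refine conjTranspose_mul_mul_apply_self_le (isHermitian_conjTranspose_mul_self E)
    (fun j => ?_) hU k
  rw [← sval_sq]
  exact pow_le_pow_left₀ (sval_nonneg E j) (sval_le_specNorm E j) 2

lemma sum_sq_mul_eigenvectorUnitary_col (B : Matrix (Fin m) (Fin q) ℝ) (k : Fin q) :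
    ∑ i, (B * ((isHermitian_conjTranspose_mul_self B).eigenvectorUnitary :
      Matrix (Fin q) (Fin q) ℝ)) i k ^ 2 = sval B k ^ 2 := by
  have hdiag := (isHermitian_conjTranspose_mul_self B).conjStarAlgAut_star_eigenvectorUnitary
  simp only [Unitary.conjStarAlgAut_apply, Unitary.coe_star, star_star] at hdiag
  rw [← conjTranspose_mul_self_apply_self, conjTranspose_mul, sval_sq, ← star_eq_conjTranspose]
  simpa [Matrix.mul_assoc] using congrFun (congrFun hdiag k) k

theorem trace_conjTranspose_mul_le (E B : Matrix (Fin m) (Fin q) ℝ) :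
    trace (Eᴴ * B) ≤ specNorm E * nucNorm B := by
  set u := (isHermitian_conjTranspose_mul_self B).eigenvectorUnitary
  set U : Matrix (Fin q) (Fin q) ℝ := ↑u
  have hU : Uᴴ * U = 1 := Unitary.coe_star_mul_self u
  have hU' : U * Uᴴ = 1 := Unitary.coe_mul_star_self u
  have htrace : trace (Eᴴ * B) = ∑ k, ∑ i, (E * U) i k * (B * U) i k := by
    calc trace (Eᴴ * B) = trace (Uᴴ * (Eᴴ * B * U)) := by
          rw [trace_mul_comm Uᴴ, Matrix.mul_assoc, hU', Matrix.mul_one]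
      _ = trace ((E * U)ᴴ * (B * U)) := by simp only [conjTranspose_mul, Matrix.mul_assoc]
      _ = _ := by simp only [trace, diag_apply, mul_apply, conjTranspose_apply, star_trivial]
  rw [htrace, nucNorm, Finset.mul_sum]
  gcongr with k
  calc ∑ i, (E * U) i k * (B * U) i k
      ≤ √(∑ i, (E * U) i k ^ 2) * √(∑ i, (B * U) i k ^ 2) := Real.sum_mul_le_sqrt_mul_sqrt _ _ _
    _ ≤ √(specNorm E ^ 2) * √(sval B k ^ 2) := by
        rw [sum_sq_mul_eigenvectorUnitary_col]
        gcongr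
        exact sum_sq_mul_col_le_specNorm_sq E hU k
    _ = specNorm E * sval B k := by
        rw [Real.sqrt_sq (specNorm_nonneg E), Real.sqrt_sq (sval_nonneg B k)]

lemma frobNorm_sq (X : Matrix (Fin m) (Fin q) ℝ) : frobNorm X ^ 2 = trace (Xᴴ * X) :=
  Real.sq_sqrt (posSemidef_conjTranspose_mul_self X).trace_nonneg

lemma frobNorm_sub_sq (X Y : Matrix (Fin m) (Fin q) ℝ) :
    frobNorm (X - Y) ^ 2 = frobNorm X ^ 2 - 2 * trace (Xᴴ * Y) + frobNorm Y ^ 2 := by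
  rw [frobNorm_sq, frobNorm_sq, frobNorm_sq, conjTranspose_sub, Matrix.sub_mul, Matrix.mul_sub,
    Matrix.mul_sub, trace_sub, trace_sub, trace_sub, trace_conjTranspose_mul_comm X Y]
  ring

lemma frobNorm_sub_sq_le_of_isMinimizer {Shat Sig Slam : Matrix (Fin m) (Fin q) ℝ} {lam : ℝ}
    (hclose : 2 * specNorm (Shat - Sig) ≤ lam)
    (hmin : ∀ B : Matrix (Fin m) (Fin q) ℝ,
        frobNorm (Shat - Slam) ^ 2 + lam * nucNorm Slam
          ≤ frobNorm (Shat - B) ^ 2 + lam * nucNorm B)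
    (A : Matrix (Fin m) (Fin q) ℝ) :
    frobNorm (Slam - Sig) ^ 2 ≤ frobNorm (A - Sig) ^ 2 + 2 * lam * nucNorm A := by
  set E := Shat - Sig
  have hcross :
      2 * trace (Eᴴ * Slam) - 2 * trace (Eᴴ * A) ≤ lam * (nucNorm Slam + nucNorm A) := by
    have hSlam := trace_conjTranspose_mul_le E Slam
    have hA := trace_conjTranspose_mul_le E (-A)
    rw [Matrix.mul_neg, trace_neg, nucNorm_neg] at hA
    have hgap : 0 ≤ (lam - 2 * specNorm E) * (nucNorm Slam + nucNorm A) :=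
      mul_nonneg (by linarith) (add_nonneg (nucNorm_nonneg Slam) (nucNorm_nonneg A))
    linarith
  have hShat : Shat = E + Sig := by simp [E]
  have h := hmin A
  rw [show Shat - Slam = E - (Slam - Sig) by rw [hShat]; abel,
    show Shat - A = E - (A - Sig) by rw [hShat]; abel, frobNorm_sub_sq E, frobNorm_sub_sq E,
    Matrix.mul_sub, Matrix.mul_sub, trace_sub, trace_sub] at h
  linarith

theorem oracle_inequality_nuclear_general {d : ℕ}
    (Shat Sig Slam : Matrix (Fin d) (Fin d) ℝ) (lam : ℝ)
    (hclose : 2 * specNorm (Shat - Sig) ≤ lam)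
    (hmin : ∀ B : Matrix (Fin d) (Fin d) ℝ,
        frobNorm (Shat - Slam) ^ 2 + lam * nucNorm Slam
          ≤ frobNorm (Shat - B) ^ 2 + lam * nucNorm B) :
    (∀ A : Matrix (Fin d) (Fin d) ℝ,
        frobNorm (Slam - Sig) ^ 2 ≤ frobNorm (A - Sig) ^ 2 + 2 * lam * nucNorm A) ∧
    frobNorm (Slam - Sig) ^ 2 ≤ 2 * lam * nucNorm Sig := by
  have oracle := frobNorm_sub_sq_le_of_isMinimizer hclose hmin
  exact ⟨oracle, by simpa [frobNorm] using oracle Sig⟩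

/-- Oracle inequality for the penalized estimator: nuclear-norm bound. -/
theorem oracle_inequality_nuclear {d : ℕ}
    (Shat Sig Slam : Matrix (Fin d) (Fin d) ℝ) (lam : ℝ) (hlam : 0 < lam)
    (hclose : 2 * specNorm (Shat - Sig) ≤ lam)
    (hmin : ∀ B : Matrix (Fin d) (Fin d) ℝ,
        frobNorm (Shat - Slam) ^ 2 + lam * nucNorm Slam
          ≤ frobNorm (Shat - B) ^ 2 + lam * nucNorm B) :
    (∀ A : Matrix (Fin d) (Fin d) ℝ,
        frobNorm (Slam - Sig) ^ 2 ≤ frobNorm (A - Sig) ^ 2 + 2 * lam * nucNorm A) ∧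
    frobNorm (Slam - Sig) ^ 2 ≤ 2 * lam * nucNorm Sig :=
  oracle_inequality_nuclear_general Shat Sig Slam lam hclose hmin
end
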